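/- Let F be a tree and let G be a graph not containing F⁺ as a minor. If S ⊆ V(G) is such that G[S] contains a spanning subgraph isomorphic to F (in particular |S| = |V(F)|), then there exists a thin (S, |V(F)|)-octopus of G. -/

import Mathlib

open SimpleGraph

/-- A tree-decomposition of the graph `G` over the tree `τ` with bags `X`. -/
structure IsTreeDecomp {V : Type} {T : Type} (G : SimpleGraph V) (τ : SimpleGraph T)
    (X : T → Set V) : Prop where
  isTree : τ.IsTree
  coverV : ∀ v : V, ∃ t, v ∈ X t
  coverE : ∀ ⦃u v : V⦄, G.Adj u v → ∃ t, u ∈ X t ∧ v ∈ X t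
  subtreeConn : ∀ v : V, (τ.induce {t | v ∈ X t}).Connected

/-- The graph `G` has tree-width at most `w`. -/
def TreewidthAtMost {V : Type} (G : SimpleGraph V) (w : ℤ) : Prop :=
  ∃ (T : Type) (τ : SimpleGraph T) (X : T → Set V),
    IsTreeDecomp G τ X ∧ ∀ t, ((X t).ncard : ℤ) ≤ w + 1

/-- `H` is a minor of `G`: there is a family of nonempty, pairwise disjoint, connected
branch sets in `G`, one for each vertex of `H`, with edges of `H` realized by edges of `G`. -/
def IsMinorOf {W V : Type} (H : SimpleGraph W) (G : SimpleGraph V) : Prop :=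
  ∃ f : W → Set V, (∀ w, (f w).Nonempty) ∧ (∀ w, (G.induce (f w)).Connected) ∧
    (Pairwise fun w₁ w₂ => Disjoint (f w₁) (f w₂)) ∧
    ∀ ⦃w₁ w₂⦄, H.Adj w₁ w₂ → ∃ u ∈ f w₁, ∃ x ∈ f w₂, G.Adj u x

/-- `F⁺`: the graph obtained from `F` by adding a new apex vertex adjacent to all of `F`. -/
def addApex {α : Type} (F : SimpleGraph α) : SimpleGraph (Option α) :=
  SimpleGraph.fromRel (fun a b => (a = none ∧ b ≠ none) ∨
    ∃ x y, a = some x ∧ b = some y ∧ F.Adj x y)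

/-- The neighbourhood `N_G(X)` of a vertex set `X`. -/
def nbhd {V : Type} (G : SimpleGraph V) (X : Set V) : Set V :=
  {v | v ∉ X ∧ ∃ u ∈ X, G.Adj u v}

/-!
Cut `G` along `S`. For a component `C` of `G - S`, the neighbourhood `N(C) ⊆ S` is a proper
subset of `S`: otherwise the branch sets `C` and `{φ a}` form an `F⁺` minor. The octopus is the
spider with body bag `S` and, for every `C`, a leg `N(C) — C ∪ N(C)`. Only the ends of the legs
can have more than `|S| = |V(F)|` vertices, and their parents `N(C)` have fewer than `|S|`, so
no wrist is thick.
-/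

namespace SimpleGraph

theorem isAcyclic_of_unique_lower_neighbor {V : Type*} {G : SimpleGraph V} (d : V → ℕ)
    (hne : ∀ ⦃a b⦄, G.Adj a b → d a ≠ d b)
    (hlower : ∀ ⦃a b c⦄, G.Adj a b → G.Adj a c → d b < d a → d c < d a → b = c) :
    G.IsAcyclic := by
  classical
  intro v c hc
  obtain ⟨x, hx, hmax⟩ := c.support.toFinset.exists_max_image d ⟨v, by simp⟩
  rw [List.mem_toFinset] at hx
  -- on the cycle rotated to start at a highest vertex `x`, both neighbours of `x` are lower
  set c' := c.rotate x hx
  have hc' : c'.IsCycle := hc.rotate hx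
  have hlt : ∀ i, G.Adj x (c'.getVert i) → d (c'.getVert i) < d x := fun i hadj =>
    (hmax _ (List.mem_toFinset.mpr ((c.mem_support_rotate_iff x hx).mp
      (c'.getVert_mem_support i)))).lt_of_ne (hne hadj).symm
  have hsnd := Walk.adj_snd hc'.not_nil
  have hpen := (Walk.adj_penultimate hc'.not_nil).symm
  exact hc'.snd_ne_penultimate (hlower hsnd hpen (hlt 1 hsnd) (hlt _ hpen))

/-- The spider with a leg of length two for every `i : ι`: leg `i` is the path
`none — some (i, false) — some (i, true)` from the body through the hip to the foot. -/
def spider (ι : Type*) : SimpleGraph (Option (ι × Bool)) where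
  Adj
    | none, some (_, false) | some (_, false), none => True
    | some (i, false), some (j, true) | some (i, true), some (j, false) => i = j
    | _, _ => False
  symm := ⟨by rintro (_ | ⟨i, _ | _⟩) (_ | ⟨j, _ | _⟩) h <;> first | exact h.symm | exact h⟩
  loopless := ⟨by rintro (_ | ⟨i, _ | _⟩) h <;> exact h⟩

variable {ι : Type*}

lemma spider_adj_none_hip (i : ι) : (spider ι).Adj none (some (i, false)) := trivial

lemma spider_adj_hip_foot (i : ι) : (spider ι).Adj (some (i, false)) (some (i, true)) :=
  rfl

lemma spider_adj_foot_iff {i : ι} {t : Option (ι × Bool)} :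
    (spider ι).Adj (some (i, true)) t ↔ t = some (i, false) := by
  rcases t with _ | ⟨j, _ | _⟩ <;> simp [spider, eq_comm]

lemma spider_reachable_none (t : Option (ι × Bool)) : (spider ι).Reachable none t := by
  rcases t with _ | ⟨i, _ | _⟩
  · rfl
  · exact (spider_adj_none_hip i).reachable
  · exact (spider_adj_none_hip i).reachable.trans (spider_adj_hip_foot i).reachable

theorem isTree_spider : (spider ι).IsTree := by
  refine ⟨⟨fun s t => (spider_reachable_none s).symm.trans (spider_reachable_none t)⟩,
    isAcyclic_of_unique_lower_neighbor (fun t => t.elim 0 fun p => cond p.2 2 1) ?_ ?_⟩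
  · rintro (_ | ⟨i, _ | _⟩) (_ | ⟨j, _ | _⟩) h <;> simp_all [spider]
  · rintro (_ | ⟨i, _ | _⟩) (_ | ⟨j, _ | _⟩) (_ | ⟨k, _ | _⟩) h₁ h₂ <;> simp_all [spider]

lemma connected_induce_spider {A : Set (Option (ι × Bool))} (hnone : none ∈ A)
    (hfoot : ∀ i, some (i, true) ∈ A → some (i, false) ∈ A) :
    ((spider ι).induce A).Connected := by
  refine connected_iff_exists_forall_reachable _ |>.mpr ⟨⟨none, hnone⟩, ?_⟩
  rintro ⟨_ | ⟨i, _ | _⟩, ht⟩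
  · rfl
  · exact Adj.reachable (spider_adj_none_hip i : (spider ι).Adj _ _)
  · have hip : ((spider ι).induce A).Adj ⟨none, hnone⟩ ⟨_, hfoot i ht⟩ := spider_adj_none_hip i
    exact hip.reachable.trans (Adj.reachable (spider_adj_hip_foot i : (spider ι).Adj _ _))

variable {V : Type} {G : SimpleGraph V} {s : Set V}

namespace ConnectedComponent

def coeSupp (k : (G.induce s).ConnectedComponent) : Set V := Subtype.val '' k.supp

lemma mem_coeSupp_iff {k : (G.induce s).ConnectedComponent} {v : V} :
    v ∈ k.coeSupp ↔ ∃ h : v ∈ s, (G.induce s).connectedComponentMk ⟨v, h⟩ = k := by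
  simp [coeSupp]

lemma mem_coeSupp_connectedComponentMk {v : V} (h : v ∈ s) :
    v ∈ ((G.induce s).connectedComponentMk ⟨v, h⟩).coeSupp :=
  mem_coeSupp_iff.mpr ⟨h, rfl⟩

lemma coeSupp_subset (k : (G.induce s).ConnectedComponent) : k.coeSupp ⊆ s := by
  rintro _ ⟨v, -, rfl⟩
  exact v.2

lemma connected_induce_coeSupp (k : (G.induce s).ConnectedComponent) :
    (G.induce k.coeSupp).Connected :=
  k.connected_toSimpleGraph.map ⟨fun v => ⟨v.1.1, v.1, v.2, rfl⟩, id⟩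
    (by rintro ⟨_, v, hv, rfl⟩; exact ⟨⟨v, hv⟩, rfl⟩)

lemma nbhd_coeSupp_subset (k : (G.induce s).ConnectedComponent) : nbhd G k.coeSupp ⊆ sᶜ := by
  rintro v ⟨hvk, u, hu, huv⟩ hv
  obtain ⟨hus, rfl⟩ := mem_coeSupp_iff.mp hu
  exact hvk (mem_coeSupp_iff.mpr
    ⟨hv, (connectedComponentMk_eq_of_adj
      (show (G.induce s).Adj ⟨u, hus⟩ ⟨v, hv⟩ from huv)).symm⟩)

end ConnectedComponent

end SimpleGraph

lemma mem_union_nbhd_of_adj {V : Type} {G : SimpleGraph V} {A : Set V} {u v : V} (hu : u ∈ A)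
    (huv : G.Adj u v) : v ∈ A ∪ nbhd G A := by
  by_cases hv : v ∈ A
  exacts [.inl hv, .inr ⟨hv, u, hu, huv⟩]

theorem isMinorOf_addApex {α V : Type} {F : SimpleGraph α} {G : SimpleGraph V} {φ : α → V}
    (hinj : Function.Injective φ) (hhom : ∀ ⦃a b : α⦄, F.Adj a b → G.Adj (φ a) (φ b))
    {C : Set V} (hC : (G.induce C).Connected) (hdom : Set.range φ ⊆ nbhd G C) :
    IsMinorOf (addApex F) G := by
  have hφC (a : α) : φ a ∉ C := (hdom ⟨a, rfl⟩).1
  refine ⟨fun o => o.elim C fun a => {φ a}, ?_, ?_, ?_, ?_⟩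
  · rintro (_ | a)
    exacts [Set.nonempty_coe_sort.mp hC.nonempty, Set.singleton_nonempty _]
  · rintro (_ | a)
    · exact hC
    · exact (.of_subsingleton : (G.induce {φ a}).Connected)
  · rintro (_ | a) (_ | b) hab
    · exact absurd rfl hab
    · simpa using hφC b
    · simpa using hφC a
    · simpa using hinj.ne fun h => hab (congrArg some h)
  · rintro (_ | a) (_ | b) hab <;> simp [addApex] at hab
    · obtain ⟨-, u, hu, hub⟩ := hdom ⟨b, rfl⟩
      exact ⟨u, hu, φ b, rfl, hub⟩
    · obtain ⟨-, u, hu, hua⟩ := hdom ⟨a, rfl⟩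
      exact ⟨φ a, rfl, u, hu, hua.symm⟩
    · rcases hab.2 with hab | hab
      exacts [⟨φ a, rfl, φ b, rfl, hhom hab⟩, ⟨φ a, rfl, φ b, rfl, (hhom hab).symm⟩]

section Octopus

variable {V : Type} (G : SimpleGraph V) (S : Set V)

def octopusBags : Option ((G.induce Sᶜ).ConnectedComponent × Bool) → Set V
  | none => S
  | some (k, false) => nbhd G k.coeSupp
  | some (k, true) => k.coeSupp ∪ nbhd G k.coeSupp

variable {G S}

lemma nbhd_coeSupp_subset_of_compl (k : (G.induce Sᶜ).ConnectedComponent) :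
    nbhd G k.coeSupp ⊆ S := by
  simpa using k.nbhd_coeSupp_subset

lemma mem_octopusBags_foot {v : V} (hv : v ∉ S) :
    v ∈ octopusBags G S (some ((G.induce Sᶜ).connectedComponentMk ⟨v, hv⟩, true)) :=
  .inl (ConnectedComponent.mem_coeSupp_connectedComponentMk _)

lemma eq_foot_of_mem_octopusBags {v : V} (hv : v ∉ S) {t} (ht : v ∈ octopusBags G S t) :
    t = some ((G.induce Sᶜ).connectedComponentMk ⟨v, hv⟩, true) := by
  rcases t with _ | ⟨k, _ | _⟩
  · exact absurd ht hv
  · exact absurd (nbhd_coeSupp_subset_of_compl k ht) hv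
  · rcases ht with hk | hN
    · obtain ⟨-, rfl⟩ := ConnectedComponent.mem_coeSupp_iff.mp hk
      rfl
    · exact absurd (nbhd_coeSupp_subset_of_compl k hN) hv

theorem isTreeDecomp_octopusBags : IsTreeDecomp G (spider _) (octopusBags G S) := by
  refine ⟨isTree_spider, fun v => ?_, fun u v huv => ?_, fun v => ?_⟩
  · by_cases hv : v ∈ S
    exacts [⟨none, hv⟩, ⟨_, mem_octopusBags_foot hv⟩]
  · by_cases hu : u ∈ S
    · by_cases hv : v ∈ S
      · exact ⟨none, hu, hv⟩
      · have hvk := ConnectedComponent.mem_coeSupp_connectedComponentMk (G := G) (s := Sᶜ) hv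
        exact ⟨some (_, true), mem_union_nbhd_of_adj hvk huv.symm, .inl hvk⟩
    · have huk := ConnectedComponent.mem_coeSupp_connectedComponentMk (G := G) (s := Sᶜ) hu
      exact ⟨some (_, true), .inl huk, mem_union_nbhd_of_adj huk huv⟩
  · by_cases hv : v ∈ S
    · refine connected_induce_spider hv fun k hk => ?_
      exact hk.resolve_left fun hvk => k.coeSupp_subset hvk hv
    · have : Subsingleton {t | v ∈ octopusBags G S t} := ⟨fun t t' => Subtype.ext <|
        (eq_foot_of_mem_octopusBags hv t.2).trans (eq_foot_of_mem_octopusBags hv t'.2).symm⟩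
      have : Nonempty {t | v ∈ octopusBags G S t} := ⟨⟨_, Set.mem_ofPred.mpr (mem_octopusBags_foot hv)⟩⟩
      exact .of_subsingleton

end Octopus

theorem stmt4_general {VF VG : Type} [Fintype VF]
    (F : SimpleGraph VF) (G : SimpleGraph VG)
    (hminor : ¬ IsMinorOf (addApex F) G)
    (S : Set VG) (φ : VF → VG) (hinj : Function.Injective φ)
    (hrange : Set.range φ = S)
    (hhom : ∀ ⦃a b : VF⦄, F.Adj a b → G.Adj (φ a) (φ b)) :
    ∃ (T : Type) (τ : SimpleGraph T) (X : T → Set VG) (r : T),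
      IsTreeDecomp G τ X ∧ X r = S ∧
      (∀ t, Fintype.card VF + 1 ≤ (X t).ncard →
        t ≠ r ∧ ∃ p, τ.Adj t p ∧ (∀ q, τ.Adj t q → q = p) ∧ (X p).ncard ≤ S.ncard) ∧
      (∀ t c, τ.Adj t c → Fintype.card VF + 1 ≤ (X c).ncard → (X t).ncard ≠ S.ncard) := by
  have hScard : S.ncard = Fintype.card VF := by
    rw [← hrange, Set.ncard_range_of_injective hinj, Nat.card_eq_fintype_card]
  have hnbhd_lt (k : (G.induce Sᶜ).ConnectedComponent) : (nbhd G k.coeSupp).ncard < S.ncard := by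
    refine Set.ncard_lt_ncard ((nbhd_coeSupp_subset_of_compl k).ssubset_of_ne fun hk => ?_)
      (hrange ▸ Set.finite_range φ)
    exact hminor (isMinorOf_addApex hinj hhom k.connected_induce_coeSupp (hrange.trans hk.symm).le)
  have hbig (t) (ht : Fintype.card VF + 1 ≤ (octopusBags G S t).ncard) :
      ∃ k, t = some (k, true) := by
    rcases t with _ | ⟨k, _ | _⟩
    · simp only [octopusBags] at ht; omega
    · have := hnbhd_lt k; simp only [octopusBags] at ht; omega
    · exact ⟨k, rfl⟩
  refine ⟨_, spider _, octopusBags G S, none, isTreeDecomp_octopusBags, rfl,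
    fun t ht => ?_, fun t c htc hc => ?_⟩
  · obtain ⟨k, rfl⟩ := hbig t ht
    exact ⟨nofun, _, (spider_adj_hip_foot k).symm, fun q => spider_adj_foot_iff.mp,
      (hnbhd_lt k).le⟩
  · obtain ⟨k, rfl⟩ := hbig c hc
    obtain rfl := spider_adj_foot_iff.mp htc.symm
    exact (hnbhd_lt k).ne

/-- if `G` has no `F⁺` minor and `G[S]` has a spanning subgraph isomorphic to
the tree `F`, then `G` has a thin `(S, |V(F)|)`-octopus: an `S`-rooted tree-decomposition
in which every node with bag of size ≥ |V(F)|+1 is a non-root leaf whose parent's bag has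
size ≤ |S|, and no node whose bag has size |S| has a child with bag of size ≥ |V(F)|+1. -/
theorem stmt4 {VF VG : Type} [Fintype VF] [Fintype VG]
    (F : SimpleGraph VF) (hF : F.IsTree) (G : SimpleGraph VG)
    (hminor : ¬ IsMinorOf (addApex F) G)
    (S : Set VG) (φ : VF → VG) (hinj : Function.Injective φ)
    (hrange : Set.range φ = S)
    (hhom : ∀ ⦃a b : VF⦄, F.Adj a b → G.Adj (φ a) (φ b)) :
    ∃ (T : Type) (τ : SimpleGraph T) (X : T → Set VG) (r : T),
      IsTreeDecomp G τ X ∧ X r = S ∧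
      (∀ t, Fintype.card VF + 1 ≤ (X t).ncard →
        t ≠ r ∧ ∃ p, τ.Adj t p ∧ (∀ q, τ.Adj t q → q = p) ∧ (X p).ncard ≤ S.ncard) ∧
      (∀ t c, τ.Adj t c → Fintype.card VF + 1 ≤ (X c).ncard → (X t).ncard ≠ S.ncard) :=
  stmt4_general F G hminor S φ hinj hrange hhom
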